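/- Product estimate, H^{0,1/2} to L² (Lemma 5.3, bound (prod2)): Let s > (d+1)/2. There is a constant C, depending on d, s and k, such that for every f ∈ H^{s−1}(𝕋^d) and every u ∈ H^{0,1/2}(𝕋^d), the product fu lies in L²(𝕋^d) and ‖fu‖_{L²(𝕋^d)} ≤ C ‖f‖_{H^{s−1}} ‖u‖_{H^{0,1/2}}. -/

import Mathlib

noncomputable section
open scoped BigOperators
open Filter

/-- The frequency lattice `ℤ^d` of the torus `𝕋^d`. -/
abbrev Freq (d : ℕ) := Fin d → ℤ

/-- A function on `𝕋^d`, represented by its sequence of Fourier coefficients. -/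
abbrev Coeffs (d : ℕ) := Freq d → ℂ

variable {d : ℕ}

/-- The pairing `⟨j, k⟩` between a lattice frequency and the frequency vector `k ∈ ℝ^d`. -/
def dotk (k : Fin d → ℝ) (j : Freq d) : ℝ := ∑ i, (j i : ℝ) * k i

/-- The Japanese bracket `⟨j⟩ = (1+|j|²)^{1/2}`. -/
def jb (j : Freq d) : ℝ := Real.sqrt (1 + ∑ i, ((j i : ℝ)) ^ 2)

/-- The entries of `k` are linearly independent over `ℚ` (equivalently, over `ℤ`). -/
def Indep (k : Fin d → ℝ) : Prop := ∀ j : Freq d, dotk k j = 0 → j = 0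

/-- The weight defining the anisotropic Sobolev norm `H^{s,θ}`. -/
def wt (k : Fin d → ℝ) (s θ : ℝ) (j : Freq d) : ℝ :=
  jb j ^ (2 * s) * (1 + (dotk k j) ^ 2) ^ θ

/-- Membership in the anisotropic Sobolev space `H^{s,θ}(𝕋^d)`. -/
def MemSob (k : Fin d → ℝ) (s θ : ℝ) (u : Coeffs d) : Prop :=
  Summable (fun j : Freq d => wt k s θ j * ‖u j‖ ^ 2)

/-- The `H^{s,θ}(𝕋^d)` norm. -/
def sobNorm (k : Fin d → ℝ) (s θ : ℝ) (u : Coeffs d) : ℝ :=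
  Real.sqrt (∑' j : Freq d, wt k s θ j * ‖u j‖ ^ 2)

/-- Membership in the Sobolev space `H^s(𝕋^d)`; `H^0 = L²`. -/
def MemHs (s : ℝ) (u : Coeffs d) : Prop :=
  Summable (fun j : Freq d => jb j ^ (2 * s) * ‖u j‖ ^ 2)

/-- The `H^s(𝕋^d)` norm; for `s = 0` this is the `L²(𝕋^d)` norm (spectrally normalized). -/
def HsNorm (s : ℝ) (u : Coeffs d) : ℝ :=
  Real.sqrt (∑' j : Freq d, jb j ^ (2 * s) * ‖u j‖ ^ 2)

/-- The value of the function with Fourier coefficients `u` at the point `α ∈ 𝕋^d = ℝ^d/(2πℤ)^d`,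
namely `Σ_j û_j e^{i⟨j,α⟩}`. -/
def value (u : Coeffs d) (α : Fin d → ℝ) : ℂ :=
  ∑' j : Freq d, u j * Complex.exp (Complex.I * ((∑ i, (j i : ℝ) * α i : ℝ) : ℂ))

/-- The squared norm of the space `ℋ^σ = H^σ × H^{σ,1/2}`. -/
def HHnormSq (k : Fin d → ℝ) (σ : ℝ) (W R : Coeffs d) : ℝ :=
  HsNorm σ W ^ 2 + sobNorm k σ (1/2) R ^ 2

/-- The norm of the space `ℋ^σ = H^σ × H^{σ,1/2}`. -/
def HHnorm (k : Fin d → ℝ) (σ : ℝ) (W R : Coeffs d) : ℝ :=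
  Real.sqrt (HHnormSq k σ W R)

/-- Membership in `ℋ^σ = H^σ × H^{σ,1/2}`. -/
def MemHH (k : Fin d → ℝ) (σ : ℝ) (W R : Coeffs d) : Prop :=
  MemHs σ W ∧ MemSob k σ (1/2) R

/-- The directional derivative `∂_α = k₁∂₁+⋯+k_d∂_d`, acting on Fourier coefficients
by multiplication by `i⟨j,k⟩`. -/
def dAl (k : Fin d → ℝ) (u : Coeffs d) : Coeffs d :=
  fun j => Complex.I * (dotk k j : ℝ) * u j

/-- The projection `P`: the Fourier multiplier which is `1` for `⟨j,k⟩ < 0`, `1/2`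
at the zero mode, `0` for `⟨j,k⟩ > 0`. -/
def Pp (k : Fin d → ℝ) (u : Coeffs d) : Coeffs d := fun j =>
  if dotk k j < 0 then u j else if dotk k j = 0 then u j / 2 else 0

/-- The complementary projection `P̄ = I - P`. -/
def Pb (k : Fin d → ℝ) (u : Coeffs d) : Coeffs d := u - Pp k u

/-- The Fourier coefficients of the complex conjugate function. -/
def conjC (u : Coeffs d) : Coeffs d := fun j => (starRingEnd ℂ) (u (-j))

/-- The Fourier coefficients of the product of two functions (convolution). -/
def cmul (u v : Coeffs d) : Coeffs d := fun j => ∑' m : Freq d, u m * v (j - m)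

/-- The Fourier coefficients of the constant function `1`. -/
def oneC : Coeffs d := fun j => if j = 0 then 1 else 0

/-- `u` is holomorphic: its Fourier coefficients vanish for `⟨j,k⟩ > 0`. -/
def Holo (k : Fin d → ℝ) (u : Coeffs d) : Prop := ∀ j : Freq d, 0 < dotk k j → u j = 0

/-- The coefficients of `2 Re u`. -/
def twoRe (u : Coeffs d) : Coeffs d := u + conjC u

/-- The coefficients of `2 Im u`. -/
def twoIm (u : Coeffs d) : Coeffs d := fun j => (u j - conjC u j) / Complex.I

/-- The coefficients of `u²`. -/
def csq (u : Coeffs d) : Coeffs d := cmul u u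

/-- The coefficients of `|u|² = u·conj(u)`. -/
def absSqC (u : Coeffs d) : Coeffs d := cmul u (conjC u)

/-- The advection velocity `b := 2 Re P[R(1-conj Y)]`. -/
def bC (k : Fin d → ℝ) (R Y : Coeffs d) : Coeffs d :=
  twoRe (Pp k (cmul R (oneC - conjC Y)))

/-- The frequency shift `a := i(P̄[conj(R)·R_α] - P[R·conj(R)_α])`. -/
def aCf (k : Fin d → ℝ) (R : Coeffs d) : Coeffs d := fun j =>
  Complex.I * ((Pb k (cmul (conjC R) (dAl k R)) - Pp k (cmul R (dAl k (conjC R)))) j)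

/-- The auxiliary function
`M := P̄[conj(R)·Y_α − R_α·conj(Y)] + P[R·conj(Y)_α − conj(R)_α·Y]`. -/
def MCf (k : Fin d → ℝ) (R Y : Coeffs d) : Coeffs d :=
  Pb k (cmul (conjC R) (dAl k Y) - cmul (dAl k R) (conjC Y))
    + Pp k (cmul R (dAl k (conjC Y)) - cmul (dAl k (conjC R)) Y)

/-- `(W,R,Y)` solves the differentiated gravity water wave system on the time interval `I`:
`𝐖_t + b·𝐖_α + (1+𝐖)(1−conj Y)·R_α = (1+𝐖)M` and `R_t + b·R_α = i(Y − a(1−Y))`,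
where `Y = 𝐖/(1+𝐖)` (equivalently `(1+𝐖)·Y = 𝐖`), so that
`(1+𝐖)/(1+conj 𝐖) = (1+𝐖)(1−conj Y)` and `i(𝐖−a)/(1+𝐖) = i(Y − a(1−Y))`. -/
structure IsWWSol (k : Fin d → ℝ) (I : Set ℝ) (W R Y : ℝ → Coeffs d) : Prop where
  holoW : ∀ t ∈ I, Holo k (W t)
  holoR : ∀ t ∈ I, Holo k (R t)
  Ymem : ∀ t ∈ I, MemHs 0 (Y t)
  Ydef : ∀ t ∈ I, cmul (oneC + W t) (Y t) = W t
  eqW : ∀ t ∈ I, ∀ j : Freq d,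
    HasDerivWithinAt (fun τ => W τ j)
      ((cmul (oneC + W t) (MCf k (R t) (Y t))
        - cmul (bC k (R t) (Y t)) (dAl k (W t))
        - cmul (cmul (oneC + W t) (oneC - conjC (Y t))) (dAl k (R t))) j) I t
  eqR : ∀ t ∈ I, ∀ j : Freq d,
    HasDerivWithinAt (fun τ => R τ j)
      ((Complex.I • (Y t - cmul (aCf k (R t)) (oneC - Y t))
        - cmul (bC k (R t) (Y t)) (dAl k (R t))) j) I t

open scoped ENNReal NNReal

/-! Apply Cauchy–Schwarz to the Fourier coefficients `∑ₘ f̂ₘ û_{j-m}` of `fu`, with the weight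
`⟨m⟩^{s-1}` on `f̂ₘ` and `⟨⟨j-m,k⟩⟩^{1/2}` on `û_{j-m}` (Schur's test): the estimate reduces to
the kernel bound `sup_c ∑ₘ ⟨m⟩^{-2(s-1)} ⟨⟨m,k⟩ - c⟩^{-1} < ∞`, where `2(s-1) > d-1`. Choose a
coordinate `i₀` with `k_{i₀} ≠ 0` and split `⟨m⟩^{-2(s-1)} ≤ ⟨m_{i₀}⟩^{-ε} ⟨m'⟩^{-β}` with `ε > 0`
and `β > d-1`: the sum over the other coordinates `m'` converges, and along `i₀` the points
`k_{i₀} n - c` are evenly spaced, so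
`∑ₙ ⟨n⟩^{-ε} ⟨k_{i₀} n - c⟩^{-1} ≤ ∑ₙ ⟨n⟩^{-2} + ∑ₙ ⟨k_{i₀} n - c⟩^{-1-ε/2}`
is bounded uniformly in `c`. -/

theorem ENNReal.sq_tsum_mul_le {ι : Type*} (a b : ι → ℝ≥0∞) :
    (∑' i, a i * b i) ^ 2 ≤ (∑' i, a i ^ 2) * ∑' i, b i ^ 2 := by
  let _ : MeasurableSpace ι := ⊤
  have holder := ENNReal.lintegral_mul_le_Lp_mul_Lq MeasureTheory.Measure.count
    Real.HolderConjugate.two_two measurable_from_top.aemeasurable measurable_from_top.aemeasurable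
    (f := a) (g := b)
  simp only [Pi.mul_apply, MeasureTheory.lintegral_count] at holder
  calc (∑' i, a i * b i) ^ 2
      ≤ ((∑' i, a i ^ (2:ℝ)) ^ (1/2:ℝ) * (∑' i, b i ^ (2:ℝ)) ^ (1/2:ℝ)) ^ 2 := by gcongr
    _ = (∑' i, a i ^ 2) * ∑' i, b i ^ 2 := by
      simp only [ENNReal.rpow_two, mul_pow, ← ENNReal.rpow_natCast, ← ENNReal.rpow_mul]
      norm_num

theorem ENNReal.sq_tsum_le_tsum_inv_mul_tsum {ι : Type*} (w x : ι → ℝ≥0∞)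
    (hw₀ : ∀ i, w i ≠ 0) (hw : ∀ i, w i ≠ ⊤) :
    (∑' i, x i) ^ 2 ≤ (∑' i, (w i)⁻¹) * ∑' i, w i * x i ^ 2 := by
  have half_sq (y : ℝ≥0∞) : (y ^ (1/2:ℝ)) ^ 2 = y := by
    rw [← ENNReal.rpow_natCast, ← ENNReal.rpow_mul]; norm_num
  have hx (i : ι) : x i = (w i)⁻¹ ^ (1/2:ℝ) * (w i ^ (1/2:ℝ) * x i) := by
    rw [← mul_assoc, ← ENNReal.mul_rpow_of_nonneg _ _ (by norm_num),
      ENNReal.inv_mul_cancel (hw₀ i) (hw i), ENNReal.one_rpow, one_mul]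
  calc (∑' i, x i) ^ 2 = (∑' i, (w i)⁻¹ ^ (1/2:ℝ) * (w i ^ (1/2:ℝ) * x i)) ^ 2 := by
        simp only [← hx]
    _ ≤ _ := ENNReal.sq_tsum_mul_le _ _
    _ = (∑' i, (w i)⁻¹) * ∑' i, w i * x i ^ 2 := by simp only [mul_pow, half_sq]

theorem ENNReal.tsum_sq_tsum_mul_sub_le {G : Type*} [AddGroup G] {w₁ w₂ : G → ℝ≥0∞}
    (hw₁₀ : ∀ m, w₁ m ≠ 0) (hw₁ : ∀ m, w₁ m ≠ ⊤) (hw₂₀ : ∀ n, w₂ n ≠ 0) (hw₂ : ∀ n, w₂ n ≠ ⊤)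
    {K : ℝ≥0∞} (hK : ∀ j, ∑' m, (w₁ m * w₂ (j - m))⁻¹ ≤ K) (x y : G → ℝ≥0∞) :
    ∑' j, (∑' m, x m * y (j - m)) ^ 2
      ≤ K * ((∑' m, w₁ m * x m ^ 2) * ∑' n, w₂ n * y n ^ 2) := by
  calc ∑' j, (∑' m, x m * y (j - m)) ^ 2
      ≤ ∑' j, K * ∑' m, w₁ m * w₂ (j - m) * (x m * y (j - m)) ^ 2 := by
        refine ENNReal.tsum_le_tsum fun j => ?_
        grw [ENNReal.sq_tsum_le_tsum_inv_mul_tsum (fun m => w₁ m * w₂ (j - m)) _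
          (fun m => mul_ne_zero (hw₁₀ m) (hw₂₀ _)) (fun m => ENNReal.mul_ne_top (hw₁ m) (hw₂ _)),
          hK j]
    _ = K * ∑' m, w₁ m * x m ^ 2 * ∑' j, w₂ (j - m) * y (j - m) ^ 2 := by
        rw [ENNReal.tsum_mul_left, ENNReal.tsum_comm]
        congr 1
        refine tsum_congr fun m => ?_
        rw [← ENNReal.tsum_mul_left]
        exact tsum_congr fun j => by ring
    _ = K * ((∑' m, w₁ m * x m ^ 2) * ∑' n, w₂ n * y n ^ 2) := by
        have shift (m : G) : ∑' j, w₂ (j - m) * y (j - m) ^ 2 = ∑' n, w₂ n * y n ^ 2 :=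
          (Equiv.subRight m).tsum_eq (fun n => w₂ n * y n ^ 2)
        simp only [shift, ENNReal.tsum_mul_right]

def bracket (x : ℝ) : ℝ := √(1 + x ^ 2)

lemma one_le_bracket (x : ℝ) : 1 ≤ bracket x :=
  Real.one_le_sqrt.mpr (by nlinarith [sq_nonneg x])

lemma bracket_pos (x : ℝ) : 0 < bracket x := one_pos.trans_le (one_le_bracket x)

lemma abs_le_bracket (x : ℝ) : |x| ≤ bracket x :=
  Real.abs_le_sqrt (by linarith)

lemma bracket_le_bracket {x y : ℝ} (h : |x| ≤ |y|) : bracket x ≤ bracket y :=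
  Real.sqrt_le_sqrt (by nlinarith [sq_abs x, sq_abs y, abs_nonneg x])

lemma bracket_sub_comm (x y : ℝ) : bracket (x - y) = bracket (y - x) := by
  rw [bracket, bracket, ← neg_sub, neg_sq]

lemma bracket_add_le (x y : ℝ) : bracket (x + y) ≤ √2 * bracket x * bracket y := by
  rw [bracket, bracket, bracket, ← Real.sqrt_mul (by norm_num), ← Real.sqrt_mul (by positivity)]
  exact Real.sqrt_le_sqrt (by nlinarith [sq_nonneg (x - y), sq_nonneg (x * y)])

lemma min_one_abs_mul_bracket_le (r x : ℝ) : min 1 |r| * bracket x ≤ bracket (r * x) := by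
  have h₀ : 0 ≤ min 1 |r| := le_min zero_le_one (abs_nonneg r)
  have h₁ : min 1 |r| ^ 2 ≤ 1 := by nlinarith [min_le_left 1 |r|]
  have h₂ : min 1 |r| ^ 2 ≤ r ^ 2 := by
    rw [← sq_abs r]; exact pow_le_pow_left₀ h₀ (min_le_right _ _) 2
  rw [bracket, bracket, ← Real.sqrt_sq h₀, ← Real.sqrt_mul (sq_nonneg _)]
  exact Real.sqrt_le_sqrt (by nlinarith [sq_nonneg x])

lemma summable_bracket_int_rpow_neg {p : ℝ} (hp : 1 < p) :
    Summable fun n : ℤ => bracket n ^ (-p) := by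
  refine Summable.of_norm_bounded_eventually (Real.summable_abs_int_rpow hp) ?_
  filter_upwards [(Set.finite_singleton (0 : ℤ)).compl_mem_cofinite] with n hn
  have hn : (1 : ℝ) ≤ |(n : ℝ)| := by
    rw [← Int.cast_abs]; exact_mod_cast Int.one_le_abs hn
  rw [Real.norm_of_nonneg (Real.rpow_nonneg (bracket_pos n).le _)]
  exact Real.rpow_le_rpow_of_nonpos (by linarith) (abs_le_bracket _) (by linarith)

lemma tsum_ofReal_bracket_int_rpow_neg_ne_top {p : ℝ} (hp : 1 < p) :
    ∑' n : ℤ, ENNReal.ofReal (bracket n ^ (-p)) ≠ ⊤ := by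
  rw [← ENNReal.ofReal_tsum_of_nonneg (fun n : ℤ => Real.rpow_nonneg (bracket_pos n).le _)
    (summable_bracket_int_rpow_neg hp)]
  exact ENNReal.ofReal_ne_top

lemma exists_tsum_bracket_mul_int_sub_rpow_neg_le {r p : ℝ} (hr : r ≠ 0) (hp : 1 < p) :
    ∃ K : ℝ≥0, ∀ c : ℝ, ∑' n : ℤ, ENNReal.ofReal (bracket (r * n - c) ^ (-p)) ≤ K := by
  set c₀ := min 1 |r| / (√2 * bracket r)
  have hc₀ : 0 < c₀ :=
    div_pos (lt_min one_pos (abs_pos.mpr hr)) (mul_pos (by positivity) (bracket_pos r))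
  have hS := tsum_ofReal_bracket_int_rpow_neg_ne_top hp
  refine ⟨(ENNReal.ofReal (c₀ ^ (-p)) * ∑' n : ℤ, ENNReal.ofReal (bracket n ^ (-p))).toNNReal,
    fun c => ?_⟩
  rw [ENNReal.coe_toNNReal (ENNReal.mul_ne_top ENNReal.ofReal_ne_top hS)]
  -- Shifting `n` by the integer `q` nearest to `c / r` compares the sum with `∑ₙ ⟨n⟩^{-p}`,
  -- up to the factor `c₀ ^ (-p)`, which does not depend on `c`.
  set q := round (c / r)
  have key (n : ℤ) : c₀ * bracket (n - q) ≤ bracket (r * n - c) := by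
    have hq : |c - r * q| ≤ |r| := by
      have : c - r * q = r * (c / r - q) := by field_simp
      rw [this, abs_mul]
      nlinarith [abs_sub_round (c / r), abs_nonneg r]
    have : min 1 |r| * bracket (n - q) ≤ √2 * bracket (r * n - c) * bracket r :=
      calc min 1 |r| * bracket (n - q) ≤ bracket (r * n - c + (c - r * q)) := by
            convert min_one_abs_mul_bracket_le r (n - q) using 2; ring
        _ ≤ √2 * bracket (r * n - c) * bracket (c - r * q) := bracket_add_le _ _
        _ ≤ √2 * bracket (r * n - c) * bracket r := by
              gcongr
              · exact mul_nonneg (by positivity) (bracket_pos _).le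
              · exact bracket_le_bracket hq
    rw [div_mul_eq_mul_div, div_le_iff₀ (mul_pos (by positivity) (bracket_pos r))]
    linarith
  calc ∑' n : ℤ, ENNReal.ofReal (bracket (r * n - c) ^ (-p))
      ≤ ∑' n : ℤ, ENNReal.ofReal (c₀ ^ (-p)) * ENNReal.ofReal (bracket (n - q : ℤ) ^ (-p)) := by
        refine ENNReal.tsum_le_tsum fun n => ?_
        rw [← ENNReal.ofReal_mul (by positivity), ← Real.mul_rpow hc₀.le (bracket_pos _).le]
        push_cast
        exact ENNReal.ofReal_le_ofReal <| Real.rpow_le_rpow_of_nonpos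
          (mul_pos hc₀ (bracket_pos _)) (key n) (by linarith)
    _ = ENNReal.ofReal (c₀ ^ (-p)) * ∑' n : ℤ, ENNReal.ofReal (bracket n ^ (-p)) := by
        rw [ENNReal.tsum_mul_left]
        exact congrArg _ ((Equiv.subRight q).tsum_eq fun n : ℤ => ENNReal.ofReal (bracket n ^ (-p)))

lemma rpow_neg_mul_inv_le_add {A X ε : ℝ} (hA : 1 ≤ A) (hX : 1 ≤ X) (hε : 0 < ε) :
    A ^ (-ε) * X⁻¹ ≤ A ^ (-2 : ℝ) + X ^ (-(1 + ε / 2)) := by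
  have hA₀ : 0 < A := one_pos.trans_le hA
  have hX₀ : 0 < X := one_pos.trans_le hX
  have hXhalf : 0 < X ^ (1 / 2 : ℝ) := Real.rpow_pos_of_pos hX₀ _
  rcases le_total (X ^ (1 / 2 : ℝ)) A with h | h
  · have : A ^ (-ε) ≤ X ^ (-(ε / 2)) := by
      calc A ^ (-ε) ≤ (X ^ (1 / 2 : ℝ)) ^ (-ε) := Real.rpow_le_rpow_of_nonpos hXhalf h (by linarith)
        _ = X ^ (-(ε / 2)) := by rw [← Real.rpow_mul hX₀.le]; ring_nf
    calc A ^ (-ε) * X⁻¹ ≤ X ^ (-(ε / 2)) * X⁻¹ := by gcongr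
      _ = X ^ (-(1 + ε / 2)) := by
        rw [← Real.rpow_neg_one, ← Real.rpow_add hX₀]; ring_nf
      _ ≤ _ := le_add_of_nonneg_left (Real.rpow_nonneg hA₀.le _)
  · have : X⁻¹ ≤ A ^ (-2 : ℝ) := by
      calc X⁻¹ = (X ^ (1 / 2 : ℝ)) ^ (-2 : ℝ) := by
            rw [← Real.rpow_mul hX₀.le, ← Real.rpow_neg_one]; norm_num
        _ ≤ A ^ (-2 : ℝ) := Real.rpow_le_rpow_of_nonpos hA₀ h (by norm_num)
    calc A ^ (-ε) * X⁻¹ ≤ 1 * A ^ (-2 : ℝ) := by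
          gcongr
          · exact Real.rpow_le_one_of_one_le_of_nonpos hA (by linarith)
      _ ≤ _ := by rw [one_mul]; exact le_add_of_nonneg_right (Real.rpow_nonneg hX₀.le _)

lemma exists_tsum_bracket_int_rpow_neg_mul_inv_le {r ε : ℝ} (hr : r ≠ 0) (hε : 0 < ε) :
    ∃ K : ℝ≥0, ∀ c : ℝ,
      ∑' n : ℤ, ENNReal.ofReal (bracket n ^ (-ε) * (bracket (r * n - c))⁻¹) ≤ K := by
  obtain ⟨K, hK⟩ := exists_tsum_bracket_mul_int_sub_rpow_neg_le hr (p := 1 + ε / 2) (by linarith)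
  have hS := tsum_ofReal_bracket_int_rpow_neg_ne_top one_lt_two
  refine ⟨(∑' n : ℤ, ENNReal.ofReal (bracket n ^ (-2 : ℝ))).toNNReal + K, fun c => ?_⟩
  calc ∑' n : ℤ, ENNReal.ofReal (bracket n ^ (-ε) * (bracket (r * n - c))⁻¹)
      ≤ ∑' n : ℤ, (ENNReal.ofReal (bracket n ^ (-2 : ℝ))
          + ENNReal.ofReal (bracket (r * n - c) ^ (-(1 + ε / 2)))) := by
        refine ENNReal.tsum_le_tsum fun n => ?_
        rw [← ENNReal.ofReal_add (Real.rpow_nonneg (bracket_pos _).le _)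
          (Real.rpow_nonneg (bracket_pos _).le _)]
        exact ENNReal.ofReal_le_ofReal
          (rpow_neg_mul_inv_le_add (one_le_bracket _) (one_le_bracket _) hε)
    _ ≤ _ := by
        rw [ENNReal.tsum_add, ENNReal.coe_add, ENNReal.coe_toNNReal hS]
        gcongr
        exact hK c

lemma one_le_jb (m : Freq d) : 1 ≤ jb m :=
  Real.one_le_sqrt.mpr (le_add_of_nonneg_right (by positivity))

lemma jb_pos (m : Freq d) : 0 < jb m := one_pos.trans_le (one_le_jb m)

section insertNth

variable {D : ℕ} (i : Fin (D + 1)) (x : ℤ) (y : Fin D → ℤ)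

lemma sum_sq_cast_insertNth :
    ∑ l, ((i.insertNth x y : Fin (D + 1) → ℤ) l : ℝ) ^ 2 = (x : ℝ) ^ 2 + ∑ l, (y l : ℝ) ^ 2 := by
  simp [Fin.sum_univ_succAbove _ i]

lemma dotk_insertNth (k : Fin (D + 1) → ℝ) :
    dotk k (i.insertNth x y) = x * k i + dotk (fun l => k (i.succAbove l)) y := by
  simp [dotk, Fin.sum_univ_succAbove _ i]

lemma jb_insertNth_rpow_neg_le {β₁ β₂ : ℝ} (h₁ : 0 ≤ β₁) (h₂ : 0 ≤ β₂) :
    jb (i.insertNth x y : Fin (D + 1) → ℤ) ^ (-(β₁ + β₂)) ≤ bracket x ^ (-β₁) * jb y ^ (-β₂) := by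
  have hx : bracket x ≤ jb (i.insertNth x y : Fin (D + 1) → ℤ) := by
    rw [bracket, jb, sum_sq_cast_insertNth]
    exact Real.sqrt_le_sqrt (by linarith [show 0 ≤ ∑ l, (y l : ℝ) ^ 2 by positivity])
  have hy : jb y ≤ jb (i.insertNth x y : Fin (D + 1) → ℤ) := by
    rw [jb, jb, sum_sq_cast_insertNth]
    exact Real.sqrt_le_sqrt (by linarith [sq_nonneg (x : ℝ)])
  rw [neg_add, Real.rpow_add (jb_pos _)]
  exact mul_le_mul (Real.rpow_le_rpow_of_nonpos (bracket_pos _) hx (by linarith))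
    (Real.rpow_le_rpow_of_nonpos (jb_pos _) hy (by linarith))
    (Real.rpow_nonneg (jb_pos _).le _) (Real.rpow_nonneg (bracket_pos _).le _)

end insertNth

lemma tsum_jb_rpow_neg_ne_top : ∀ {D : ℕ} {β : ℝ}, (D : ℝ) < β →
    ∑' m : Fin D → ℤ, ENNReal.ofReal (jb m ^ (-β)) ≠ ⊤
  | 0, _, _ => by simp [tsum_fintype]
  | D + 1, β, hβ => by
    push_cast at hβ
    set t := (β - D - 1) / 2
    have hsplit : β = (1 + t) + (D + t) := by ring
    refine ne_top_of_le_ne_top (ENNReal.mul_ne_top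
      (tsum_ofReal_bracket_int_rpow_neg_ne_top (p := 1 + t) (by linarith))
      (tsum_jb_rpow_neg_ne_top (β := D + t) (by linarith))) ?_
    calc ∑' m : Fin (D + 1) → ℤ, ENNReal.ofReal (jb m ^ (-β))
        = ∑' x : ℤ, ∑' y : Fin D → ℤ, ENNReal.ofReal (jb (Fin.insertNth 0 x y) ^ (-β)) := by
          rw [← ENNReal.tsum_prod, ← (Fin.insertNthEquiv (fun _ => ℤ) 0).tsum_eq]
          rfl
      _ ≤ ∑' x : ℤ, ∑' y : Fin D → ℤ,
            ENNReal.ofReal (bracket x ^ (-(1 + t))) * ENNReal.ofReal (jb y ^ (-(D + t))) := by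
          gcongr with x y
          rw [← ENNReal.ofReal_mul (Real.rpow_nonneg (bracket_pos _).le _), hsplit]
          exact ENNReal.ofReal_le_ofReal
            (jb_insertNth_rpow_neg_le _ _ _ (by linarith) (by linarith))
      _ = _ := by simp only [ENNReal.tsum_mul_left, ENNReal.tsum_mul_right]

lemma exists_tsum_jb_rpow_neg_mul_inv_bracket_le {D : ℕ} {k : Fin (D + 1) → ℝ} {i₀ : Fin (D + 1)}
    (hk : k i₀ ≠ 0) {σ : ℝ} (hσ : (D : ℝ) < σ) :
    ∃ K : ℝ≥0, ∀ c : ℝ,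
      ∑' m, ENNReal.ofReal (jb m ^ (-σ) * (bracket (dotk k m - c))⁻¹) ≤ K := by
  obtain ⟨ε, β, hε, hβ, hσ_eq⟩ : ∃ ε β : ℝ, 0 < ε ∧ (D : ℝ) < β ∧ σ = ε + β :=
    ⟨(σ - D) / 2, (σ + D) / 2, by linarith, by linarith, by ring⟩
  obtain ⟨K₁, hK₁⟩ := exists_tsum_bracket_int_rpow_neg_mul_inv_le hk hε
  have hS := tsum_jb_rpow_neg_ne_top hβ
  refine ⟨(∑' m' : Fin D → ℤ, ENNReal.ofReal (jb m' ^ (-β))).toNNReal * K₁, fun c => ?_⟩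
  set k' := fun l => k (i₀.succAbove l)
  calc ∑' m, ENNReal.ofReal (jb m ^ (-σ) * (bracket (dotk k m - c))⁻¹)
      = ∑' m' : Fin D → ℤ, ∑' n : ℤ, ENNReal.ofReal (jb (i₀.insertNth n m') ^ (-σ)
          * (bracket (dotk k (i₀.insertNth n m') - c))⁻¹) := by
        rw [ENNReal.tsum_comm, ← ENNReal.tsum_prod, ← (Fin.insertNthEquiv (fun _ => ℤ) i₀).tsum_eq]
        rfl
    _ ≤ ∑' m' : Fin D → ℤ, ENNReal.ofReal (jb m' ^ (-β)) * ∑' n : ℤ,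
          ENNReal.ofReal (bracket n ^ (-ε) * (bracket (k i₀ * n - (c - dotk k' m')))⁻¹) := by
        simp_rw [← ENNReal.tsum_mul_left]
        gcongr with m' n
        rw [← ENNReal.ofReal_mul (Real.rpow_nonneg (jb_pos _).le _)]
        refine ENNReal.ofReal_le_ofReal ?_
        rw [dotk_insertNth, hσ_eq, show n * k i₀ + dotk k' m' - c = k i₀ * n - (c - dotk k' m') by
          ring, ← mul_assoc, mul_comm (jb m' ^ (-β))]
        gcongr
        · exact inv_nonneg.mpr (bracket_pos _).le
        · exact jb_insertNth_rpow_neg_le _ _ _ (by linarith) (by linarith)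
    _ ≤ ∑' m' : Fin D → ℤ, ENNReal.ofReal (jb m' ^ (-β)) * K₁ := by
        gcongr with m'
        exact hK₁ _
    _ = _ := by rw [ENNReal.tsum_mul_right, ENNReal.coe_mul, ENNReal.coe_toNNReal hS]

lemma tsum_ofReal_mul_enorm_sq {ι E : Type*} [SeminormedAddCommGroup E] {w : ι → ℝ}
    (hw : ∀ i, 0 ≤ w i) {v : ι → E} (h : Summable fun i => w i * ‖v i‖ ^ 2) :
    ∑' i, ENNReal.ofReal (w i) * ‖v i‖ₑ ^ 2 = ENNReal.ofReal (∑' i, w i * ‖v i‖ ^ 2) := by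
  rw [ENNReal.ofReal_tsum_of_nonneg (fun i => mul_nonneg (hw i) (sq_nonneg _)) h]
  congr 1 with i
  rw [ENNReal.ofReal_mul (hw i), ENNReal.ofReal_pow (norm_nonneg _), ofReal_norm]

lemma summable_and_tsum_norm_sq_le {ι E : Type*} [SeminormedAddCommGroup E] {v : ι → E} {M : ℝ}
    (hM : 0 ≤ M) (h : ∑' i, ‖v i‖ₑ ^ 2 ≤ ENNReal.ofReal M) :
    Summable (fun i => ‖v i‖ ^ 2) ∧ ∑' i, ‖v i‖ ^ 2 ≤ M := by
  have hsum : Summable fun i => ‖v i‖ ^ 2 := by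
    simpa using ENNReal.summable_toReal (ne_top_of_le_ne_top ENNReal.ofReal_ne_top h)
  refine ⟨hsum, (ENNReal.ofReal_le_ofReal_iff hM).mp ?_⟩
  rw [ENNReal.ofReal_tsum_of_nonneg (fun i => sq_nonneg _) hsum]
  simpa [ENNReal.ofReal_pow (norm_nonneg _), ofReal_norm] using h

lemma dotk_sub (k : Fin d → ℝ) (j m : Freq d) : dotk k (j - m) = dotk k j - dotk k m := by
  simp [dotk, sub_mul]

lemma wt_zero_half (k : Fin d → ℝ) (n : Freq d) : wt k 0 (1 / 2) n = bracket (dotk k n) := by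
  rw [wt, mul_zero, Real.rpow_zero, one_mul, bracket, Real.sqrt_eq_rpow]

lemma sq_hsNorm (s : ℝ) (u : Coeffs d) : HsNorm s u ^ 2 = ∑' j, jb j ^ (2 * s) * ‖u j‖ ^ 2 :=
  Real.sq_sqrt (tsum_nonneg fun j => mul_nonneg (Real.rpow_nonneg (jb_pos j).le _) (sq_nonneg _))

lemma sq_sobNorm_zero_half (k : Fin d → ℝ) (u : Coeffs d) :
    sobNorm k 0 (1 / 2) u ^ 2 = ∑' n, bracket (dotk k n) * ‖u n‖ ^ 2 := by
  simp only [sobNorm, wt_zero_half]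
  exact Real.sq_sqrt (tsum_nonneg fun n => mul_nonneg (bracket_pos _).le (sq_nonneg _))

lemma hsNorm_zero (u : Coeffs d) : HsNorm 0 u = √(∑' j, ‖u j‖ ^ 2) := by
  simp [HsNorm]

lemma memHs_zero_iff (u : Coeffs d) : MemHs 0 u ↔ Summable fun j => ‖u j‖ ^ 2 := by
  simp [MemHs]

lemma tsum_enorm_cmul_sq_le {k : Fin d → ℝ} {t : ℝ} {K : ℝ≥0}
    (hK : ∀ c, ∑' m, ENNReal.ofReal (jb m ^ (-(2 * t)) * (bracket (dotk k m - c))⁻¹) ≤ K)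
    {f u : Coeffs d} (hf : MemHs t f) (hu : MemSob k 0 (1 / 2) u) :
    ∑' j, ‖cmul f u j‖ₑ ^ 2
      ≤ ENNReal.ofReal (K * (HsNorm t f ^ 2 * sobNorm k 0 (1 / 2) u ^ 2)) := by
  rw [MemSob] at hu
  simp only [wt_zero_half] at hu
  set w₁ := fun m : Freq d => ENNReal.ofReal (jb m ^ (2 * t))
  set w₂ := fun n : Freq d => ENNReal.ofReal (bracket (dotk k n))
  have hkernel (j : Freq d) : ∑' m, (w₁ m * w₂ (j - m))⁻¹ ≤ K := by
    refine le_of_eq_of_le (tsum_congr fun m => ?_) (hK (dotk k j))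
    simp only [w₁, w₂, dotk_sub, bracket_sub_comm (dotk k j)]
    rw [← ENNReal.ofReal_mul (Real.rpow_nonneg (jb_pos m).le _),
      ← ENNReal.ofReal_inv_of_pos (mul_pos (Real.rpow_pos_of_pos (jb_pos m) _) (bracket_pos _)),
      mul_inv, Real.rpow_neg (jb_pos m).le]
  calc ∑' j, ‖cmul f u j‖ₑ ^ 2 ≤ ∑' j, (∑' m, ‖f m‖ₑ * ‖u (j - m)‖ₑ) ^ 2 := by
        gcongr with j
        exact enorm_tsum_le_tsum_enorm.trans_eq (by simp only [enorm_mul])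
    _ ≤ K * ((∑' m, w₁ m * ‖f m‖ₑ ^ 2) * ∑' n, w₂ n * ‖u n‖ₑ ^ 2) :=
        ENNReal.tsum_sq_tsum_mul_sub_le
          (fun m => (ENNReal.ofReal_pos.mpr (Real.rpow_pos_of_pos (jb_pos m) _)).ne')
          (fun _ => ENNReal.ofReal_ne_top)
          (fun n => (ENNReal.ofReal_pos.mpr (bracket_pos _)).ne')
          (fun _ => ENNReal.ofReal_ne_top) hkernel _ _
    _ = _ := by
        rw [tsum_ofReal_mul_enorm_sq (fun m => Real.rpow_nonneg (jb_pos m).le _) hf,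
          tsum_ofReal_mul_enorm_sq (fun n => (bracket_pos _).le) hu, sq_hsNorm,
          sq_sobNorm_zero_half, ENNReal.ofReal_mul K.coe_nonneg, ENNReal.ofReal_coe_nnreal,
          ENNReal.ofReal_mul (tsum_nonneg fun m =>
            mul_nonneg (Real.rpow_nonneg (jb_pos m).le _) (sq_nonneg _))]

lemma Indep.exists_ne_zero [NeZero d] {k : Fin d → ℝ} (hk : Indep k) : ∃ i, k i ≠ 0 := by
  by_contra! h
  simpa using congrFun (hk (Pi.single 0 1) (by simp [dotk, h])) 0

/-- **Lemma 5.3, bound (prod2) (Product estimate, `H^{0,1/2} → L²`).** Let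
`s > (d+1)/2`. There is a constant `C = C(d,s,k)` such that for every
`f ∈ H^{s-1}(𝕋^d)` and every `u ∈ H^{0,1/2}(𝕋^d)`, the product `fu` lies in `L²(𝕋^d)`
and `‖fu‖_{L²} ≤ C ‖f‖_{H^{s-1}} ‖u‖_{H^{0,1/2}}`. -/
theorem product_H012_L2
    (d : ℕ) (hd : 1 ≤ d) (k : Fin d → ℝ) (hk : Indep k)
    (s : ℝ) (hs : ((d : ℝ) + 1) / 2 < s) :
    ∃ C : ℝ, 0 < C ∧
      ∀ f u : Coeffs d, MemHs (s - 1) f → MemSob k 0 (1/2) u →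
        MemHs 0 (cmul f u) ∧
        HsNorm 0 (cmul f u) ≤ C * HsNorm (s - 1) f * sobNorm k 0 (1/2) u := by
  obtain ⟨D, rfl⟩ : ∃ D, d = D + 1 := ⟨d - 1, by omega⟩
  obtain ⟨i₀, hi₀⟩ := hk.exists_ne_zero
  obtain ⟨K, hK⟩ := exists_tsum_jb_rpow_neg_mul_inv_bracket_le hi₀ (σ := 2 * (s - 1))
    (by push_cast at hs; linarith)
  refine ⟨√K + 1, by positivity, fun f u hf hu => ?_⟩
  have hf₀ : 0 ≤ HsNorm (s - 1) f := Real.sqrt_nonneg _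
  have hu₀ : 0 ≤ sobNorm k 0 (1 / 2) u := Real.sqrt_nonneg _
  obtain ⟨hsum, hle⟩ :=
    summable_and_tsum_norm_sq_le (by positivity) (tsum_enorm_cmul_sq_le hK hf hu)
  refine ⟨(memHs_zero_iff _).mpr hsum, ?_⟩
  calc HsNorm 0 (cmul f u) = √(∑' j, ‖cmul f u j‖ ^ 2) := hsNorm_zero _
    _ ≤ √(K * (HsNorm (s - 1) f ^ 2 * sobNorm k 0 (1 / 2) u ^ 2)) := Real.sqrt_le_sqrt hle
    _ = √K * HsNorm (s - 1) f * sobNorm k 0 (1 / 2) u := by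
        rw [Real.sqrt_mul K.coe_nonneg, Real.sqrt_mul (sq_nonneg _), Real.sqrt_sq hf₀,
          Real.sqrt_sq hu₀, mul_assoc]
    _ ≤ _ := by gcongr; linarith

end
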